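/- arXiv:math/0002088 — 9 statements merged into one kernel-verified Lean document; each statement's English description precedes it below -/
import Mathlib

section
/- If k is a nonzero integer with n = 4k+2, then there is no set of four positive integers {a,b,c,d} such that the product of any two distinct elements plus n is a perfect square. -/
lemma no_mod4 : ¬ ∃ a b c d : ZMod 4,
    IsSquare (a*b + 2) ∧ IsSquare (a*c + 2) ∧ IsSquare (a*d + 2) ∧
    IsSquare (b*c + 2) ∧ IsSquare (b*d + 2) ∧ IsSquare (c*d + 2) := by decide

theorem stmt_0 (k n a b c d : ℤ) (hk : k ≠ 0) (hn : n = 4*k + 2)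
    (ha : 0 < a) (hb : 0 < b) (hc : 0 < c) (hd : 0 < d)
    (hab : a ≠ b) (hac : a ≠ c) (had : a ≠ d) (hbc : b ≠ c) (hbd : b ≠ d) (hcd : c ≠ d) :
    ¬ (IsSquare (a*b + n) ∧ IsSquare (a*c + n) ∧ IsSquare (a*d + n) ∧
       IsSquare (b*c + n) ∧ IsSquare (b*d + n) ∧ IsSquare (c*d + n)) := by
  rintro ⟨h1, h2, h3, h4, h5, h6⟩
  have h4z : (4 : ZMod 4) = 0 := by decide
  have hncast : ((n : ZMod 4)) = 2 := by
    subst hn; push_cast; rw [h4z]; ring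
  apply no_mod4
  exact ⟨(a : ZMod 4), b, c, d,
    by have := h1.map (Int.castRingHom (ZMod 4)); simp only [map_add, map_mul, eq_intCast, hncast] at this; exact this,
    by have := h2.map (Int.castRingHom (ZMod 4)); simp only [map_add, map_mul, eq_intCast, hncast] at this; exact this,
    by have := h3.map (Int.castRingHom (ZMod 4)); simp only [map_add, map_mul, eq_intCast, hncast] at this; exact this,
    by have := h4.map (Int.castRingHom (ZMod 4)); simp only [map_add, map_mul, eq_intCast, hncast] at this; exact this,
    by have := h5.map (Int.castRingHom (ZMod 4)); simp only [map_add, map_mul, eq_intCast, hncast] at this; exact this,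
    by have := h6.map (Int.castRingHom (ZMod 4)); simp only [map_add, map_mul, eq_intCast, hncast] at this; exact this⟩
end

section
/- Let n be a nonzero integer and let a, b, c be integers with ab+n = r^2, ac+n = s^2, bc+n = t^2 for integers r,s,t. Define e = n(a+b+c) + 2abc - 2rst, x = at - rs, y = bs - rt, z = cr - st. Then ae + n^2 = x^2, be + n^2 = y^2, and ce + n^2 = z^2. -/
theorem stmt_3 (n a b c r s t : ℤ) (hn : n ≠ 0)
    (hr : a*b + n = r^2) (hs : a*c + n = s^2) (ht : b*c + n = t^2) :
    a * (n*(a+b+c) + 2*a*b*c - 2*r*s*t) + n^2 = (a*t - r*s)^2 ∧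
    b * (n*(a+b+c) + 2*a*b*c - 2*r*s*t) + n^2 = (b*s - r*t)^2 ∧
    c * (n*(a+b+c) + 2*a*b*c - 2*r*s*t) + n^2 = (c*r - s*t)^2 := by
  refine ⟨?_, ?_, ?_⟩
  · linear_combination (a^2)*ht + (s^2)*hr + (a*b+n)*hs
  · linear_combination (b^2)*hs + (t^2)*hr + (a*b+n)*ht
  · linear_combination (c^2)*hr + (t^2)*hs + (a*c+n)*ht
end

section
/- Let n be a nonzero integer and let a, b, c be integers with ab+n = r^2, ac+n = s^2, bc+n = t^2. Define e = n(a+b+c) + 2abc - 2rst, x = at - rs, y = bs - rt. Then n^2 · c = n^2 (a+b) + n·e + 2(abe + r·x·y). -/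
theorem stmt_4 (n a b c r s t : ℤ) (hn : n ≠ 0)
    (hr : a*b + n = r^2) (hs : a*c + n = s^2) (ht : b*c + n = t^2) :
    n^2 * c = n^2 * (a + b) + n * (n*(a+b+c) + 2*a*b*c - 2*r*s*t) +
      2 * (a*b*(n*(a+b+c) + 2*a*b*c - 2*r*s*t) + r*(a*t - r*s)*(b*s - r*t)) := by
  linear_combination (-2*a*t^2 - 2*b*s^2 + 2*r*s*t) * hr +
    (-2*b*(a*b+n)) * hs + (-2*a*(a*b+n)) * ht
end

section
/- Let n be a nonzero integer and a < b < c positive integers with ac > n and ab+n, ac+n, bc+n perfect squares; write ac+n = s^2 with s ≥ 0. If x, z are positive integers with a·z^2 - c·x^2 = n(a-c), then |sqrt((ac+n)/(ac)) - (s·x)/(a·z)| < (c·|n|)/(a·z^2). -/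
/-! Writing `r = √(ac)`, we have `√((ac+n)/(ac)) = s/r`, and the Pell equation multiplied by `a`
reads `(az)² - (rx)² = an(a-c)`. Hence `s/r - sx/(az) = sn(a-c) / (rz(az+rx))`, and the claimed
bound reduces to `sz < rz + cx`: for `n ≤ 0` this holds since `s ≤ r`, for `n > 0` since `s < 2r`
(as `n < ac`) and `rz < cx` (as `az² < cx²`). -/

section PellApproximation

variable {a c n r s x z : ℝ}

theorem div_sub_div_eq_of_pell (hr : 0 < r) (ha : 0 < a) (hz : 0 < z) (hx : 0 ≤ x)
    (hr2 : r ^ 2 = a * c) (hpell : a * z ^ 2 - c * x ^ 2 = n * (a - c)) :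
    s / r - s * x / (a * z) = s * (n * (a - c)) / (r * z * (a * z + r * x)) := by
  have : 0 < a * z + r * x := by positivity
  field_simp
  linear_combination s * a * hpell - s * x ^ 2 * hr2

theorem mul_lt_add_of_pell (hc : 0 < c) (hac : a < c) (hr : 0 < r) (hr2 : r ^ 2 = a * c)
    (hs : 0 ≤ s) (hs2 : a * c + n = s ^ 2) (hacn : n < a * c) (hx : 0 < x) (hz : 0 < z)
    (hpell : a * z ^ 2 - c * x ^ 2 = n * (a - c)) :
    s * z < r * z + c * x := by
  rcases le_or_gt n 0 with hn | hn
  · have hsr : s ≤ r := le_of_pow_le_pow_left₀ two_ne_zero hr.le (by nlinarith)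
    nlinarith [mul_pos hc hx]
  · have hsr : s < 2 * r := lt_of_pow_lt_pow_left₀ 2 (by positivity) (by nlinarith)
    have hzx : a * z ^ 2 < c * x ^ 2 := by nlinarith
    have hrz : r * z < c * x := lt_of_pow_lt_pow_left₀ 2 (by positivity) <| by
      linear_combination z ^ 2 * hr2 + c * hzx
    nlinarith

theorem abs_div_sub_div_lt_of_pell (hn : n ≠ 0) (ha : 0 < a) (hac : a < c) (hr : 0 < r)
    (hr2 : r ^ 2 = a * c) (hs : 0 ≤ s) (hs2 : a * c + n = s ^ 2) (hacn : n < a * c)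
    (hx : 0 < x) (hz : 0 < z) (hpell : a * z ^ 2 - c * x ^ 2 = n * (a - c)) :
    |s / r - s * x / (a * z)| < c * |n| / (a * z ^ 2) := by
  have hc : 0 < c := ha.trans hac
  have hn' : 0 < |n| := abs_pos.2 hn
  have hsz := mul_lt_add_of_pell hc hac hr hr2 hs hs2 hacn hx hz hpell
  have hden : 0 < r * z * (a * z + r * x) := by positivity
  rw [div_sub_div_eq_of_pell hr ha hz hx.le hr2 hpell, abs_div, abs_mul s, abs_mul n,
    abs_of_nonneg hs, abs_of_neg (sub_neg.2 hac), abs_of_pos hden,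
    div_lt_div_iff₀ (by positivity) (by positivity)]
  calc s * (|n| * -(a - c)) * (a * z ^ 2) = |n| * a * z * (s * z * (c - a)) := by ring
    _ ≤ |n| * a * z * (s * z * c) := by gcongr; nlinarith
    _ < |n| * a * z * ((r * z + c * x) * c) := by gcongr
    _ = c * |n| * (r * z * (a * z + r * x)) := by linear_combination -|n| * c * x * z * hr2

end PellApproximation

theorem stmt_6_general (n a b c s x z : ℤ) (hn : n ≠ 0)
    (ha : 0 < a) (hab : a < b) (hbc : b < c) (hacn : a*c > n)
    (hs : 0 ≤ s) (hs2 : a*c + n = s^2)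
    (hx : 0 < x) (hz : 0 < z) (hpell : a*z^2 - c*x^2 = n*(a - c)) :
    |Real.sqrt (((a:ℝ)*c + n) / ((a:ℝ)*c)) - ((s:ℝ)*x) / ((a:ℝ)*z)|
      < ((c:ℝ) * |(n:ℝ)|) / ((a:ℝ) * (z:ℝ)^2) := by
  have hac_pos : (0 : ℝ) < a * c := by have := ha.trans (hab.trans hbc); positivity
  have hs2' : (a * c + n : ℝ) = (s : ℝ) ^ 2 := by exact_mod_cast hs2
  rw [hs2', Real.sqrt_div (sq_nonneg _), Real.sqrt_sq (by exact_mod_cast hs)]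
  exact abs_div_sub_div_lt_of_pell (by exact_mod_cast hn) (by exact_mod_cast ha)
    (by exact_mod_cast hab.trans hbc) (Real.sqrt_pos.2 hac_pos) (Real.sq_sqrt hac_pos.le)
    (by exact_mod_cast hs) hs2' (by exact_mod_cast hacn) (by exact_mod_cast hx)
    (by exact_mod_cast hz) (by exact_mod_cast hpell)

theorem stmt_6 (n a b c s x z : ℤ) (hn : n ≠ 0)
    (ha : 0 < a) (hab : a < b) (hbc : b < c) (hacn : a*c > n)
    (hsqab : IsSquare (a*b + n)) (hsqbc : IsSquare (b*c + n))
    (hs : 0 ≤ s) (hs2 : a*c + n = s^2)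
    (hx : 0 < x) (hz : 0 < z) (hpell : a*z^2 - c*x^2 = n*(a - c)) :
    |Real.sqrt (((a:ℝ)*c + n) / ((a:ℝ)*c)) - ((s:ℝ)*x) / ((a:ℝ)*z)|
      < ((c:ℝ) * |(n:ℝ)|) / ((a:ℝ) * (z:ℝ)^2) :=
  stmt_6_general n a b c s x z hn ha hab hbc hacn hs hs2 hx hz hpell
end

section
/- Let n be a nonzero integer and suppose {a,b,c,d} is a set of positive integers with the property D(n) such that |n|^3 ≤ a < b < c < d. Then d > (3.847 · b · c)/n^2. -/
/-- Square-root comparison helper. -/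
lemma sqrt_lt_sqrt_int {X Y : ℤ} (hY : 0 ≤ Y) (h : X^2 < Y^2) : X < Y :=
  lt_of_pow_lt_pow_left₀ 2 hY h

lemma aux_step1 (B C e n : ℤ) (hB : 0 < B) (hC : 0 < C) (he : 0 < e) :
    (e*B)*(e*C) ≤ (B*e+n^2) * (C*e+n^2) := by
  nlinarith [mul_nonneg (sq_nonneg n) (mul_pos hB he).le,
    mul_nonneg (sq_nonneg n) (mul_pos hC he).le, sq_nonneg (n^2)]

lemma aux_step2 (B C e p S : ℤ) (hp : 0 < p) (hpBC : p ≤ B*C) (he : 0 < e)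
    (h : p*((e*B)*(e*C)) ≤ S) : (e*p)^2 ≤ S := by
  nlinarith [mul_nonneg (mul_nonneg (mul_pos he he).le hp.le) (sub_nonneg.mpr hpBC)]

/-- Gap principle core lemma for a D(n) triple {B,C,D}:
either the triple is "regular" (D = B+C+2t), or D is large. -/
lemma triple_gap (n B C D t y z m : ℤ) (hn : n ≠ 0) (hmabs : m = |n|)
    (hB : 0 < B) (hBC : B < C) (hCD : C < D)
    (ht0 : 0 ≤ t) (hy0 : 0 ≤ y) (hz0 : 0 ≤ z)
    (ht : t^2 = B*C + n) (hy : y^2 = B*D + n) (hz : z^2 = C*D + n)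
    (hm0 : m < B*C) (hm1 : m < C + D - B) (hm2 : m < B + D - C)
    (hD : n^2 < D) :
    D = B + C + 2*t ∨ n^2*D ≥ n^2*(B+C) + 4*B*C - 3*m := by
  have hmn1 : -m ≤ n := by rw [hmabs]; exact neg_abs_le n
  have hmn2 : n ≤ m := by rw [hmabs]; exact le_abs_self n
  have hm_pos : 0 < m := by rw [hmabs]; exact abs_pos.mpr hn
  have hC : 0 < C := lt_trans hB hBC
  have hDpos : 0 < D := lt_trans hC hCD
  obtain ⟨e, he⟩ : ∃ e : ℤ, e = n*(B+C+D) + 2*B*C*D - 2*t*y*z := ⟨_, rfl⟩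
  -- the three key identities
  have id1 : B*e + n^2 = (B*z - t*y)^2 := by
    rw [he]; linear_combination (-(B^2))*hz - y^2*ht - (B*C+n)*hy
  have id2 : C*e + n^2 = (C*y - t*z)^2 := by
    rw [he]; linear_combination (-(C^2))*hy - z^2*ht - (B*C+n)*hz
  have id3 : D*e + n^2 = (D*t - y*z)^2 := by
    rw [he]; linear_combination (-(D^2))*ht - z^2*hy - (B*D+n)*hz
  have idI : n^2*D = n^2*(B+C) + n*e + 2*B*C*e
      + 2*(t*((B*z - t*y)*(C*y - t*z))) := by
    rw [he]
    linear_combination (2*B*z^2 + 2*C*y^2 - 2*t*y*z) * ht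
      + (2*C*(B*C+n)) * hy + (2*B*(B*C+n)) * hz
  -- sign-determining identities
  have hP : (t*y)^2 - (B*z)^2 = n*(B*(C+D-B)+n) := by
    linear_combination y^2*ht + (B*C+n)*hy - B^2*hz
  have hQ : (t*z)^2 - (C*y)^2 = n*(C*(B+D-C)+n) := by
    linear_combination z^2*ht + (B*C+n)*hz - C^2*hy
  have hPaux : C + D - B ≤ B*(C+D-B) := le_mul_of_one_le_left (by linarith) hB
  have hQaux : B + D - C ≤ C*(B+D-C) := le_mul_of_one_le_left (by linarith) hC
  have hPpos : 0 < B*(C+D-B) + n := by linarith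
  have hQpos : 0 < C*(B+D-C) + n := by linarith
  have hn2pos : (0:ℤ) < n^2 := by positivity
  -- e ≥ 0
  have he0 : 0 ≤ e := by
    by_contra h
    push_neg at h
    have he1 : e ≤ -1 := by omega
    have hDe : D*e ≤ D*(-1) := mul_le_mul_of_nonneg_left he1 hDpos.le
    linarith [sq_nonneg (D*t - y*z), id3, hD]
  -- u*v > 0
  have huv : 0 < (B*z - t*y)*(C*y - t*z) := by
    have hBe : 0 ≤ B*e := mul_nonneg hB.le he0
    have hCe : 0 ≤ C*e := mul_nonneg hC.le he0
    have hu2 : 0 < (B*z - t*y)^2 := by rw [← id1]; linarith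
    have hv2 : 0 < (C*y - t*z)^2 := by rw [← id2]; linarith
    rcases lt_or_gt_of_ne hn with hneg | hpos
    · -- n < 0 : u > 0, v > 0
      have h1 : (t*y)^2 < (B*z)^2 := by
        have := mul_neg_of_neg_of_pos hneg hPpos; linarith
      have h2 : (t*z)^2 < (C*y)^2 := by
        have := mul_neg_of_neg_of_pos hneg hQpos; linarith
      have hu : t*y < B*z := sqrt_lt_sqrt_int (mul_nonneg hB.le hz0) h1
      have hv : t*z < C*y := sqrt_lt_sqrt_int (mul_nonneg hC.le hy0) h2
      exact mul_pos (by linarith) (by linarith)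
    · -- n > 0 : u < 0, v < 0
      have h1 : (B*z)^2 < (t*y)^2 := by
        have := mul_pos hpos hPpos; linarith
      have h2 : (C*y)^2 < (t*z)^2 := by
        have := mul_pos hpos hQpos; linarith
      have hu : B*z < t*y := sqrt_lt_sqrt_int (mul_nonneg ht0 hy0) h1
      have hv : C*y < t*z := sqrt_lt_sqrt_int (mul_nonneg ht0 hz0) h2
      exact mul_pos_of_neg_of_neg (by linarith) (by linarith)
  have htpos : 0 < t := by
    rcases ht0.eq_or_lt with h | h
    · exfalso
      have h0 : (0:ℤ)^2 = B*C + n := by rw [h]; exact ht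
      norm_num at h0
      linarith
    · exact h
  rcases he0.eq_or_lt with heq | hgt
  · -- e = 0 : D = B + C + 2t
    left
    have hu2 : (B*z - t*y)^2 = n^2 := by rw [← id1, ← heq]; ring
    have hv2 : (C*y - t*z)^2 = n^2 := by rw [← id2, ← heq]; ring
    have hprod : ((B*z - t*y)*(C*y - t*z) - n^2) * ((B*z - t*y)*(C*y - t*z) + n^2) = 0 := by
      have h4 : ((B*z - t*y)*(C*y - t*z))^2 = (n^2)^2 := by
        rw [mul_pow, hu2, hv2]; ring
      linear_combination h4
    have huvn : (B*z - t*y)*(C*y - t*z) = n^2 := by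
      rcases mul_eq_zero.mp hprod with h | h
      · linarith
      · linarith
    have hfin : n^2*D = n^2*(B + C + 2*t) := by
      rw [idI, huvn, ← heq]; ring
    exact mul_left_cancel₀ (by positivity) hfin
  · -- e ≥ 1 : D is large
    right
    have he1 : 1 ≤ e := hgt
    have hp : 0 < B*C - m := by linarith
    have hX : 0 < t*((B*z - t*y)*(C*y - t*z)) := mul_pos htpos huv
    have hA2 : (0:ℤ) < B*e + n^2 := by
      have := mul_pos hB hgt; linarith
    have hA3 : (0:ℤ) < C*e + n^2 := by
      have := mul_pos hC hgt; linarith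
    have hXsq : (t*((B*z - t*y)*(C*y - t*z)))^2 = (B*C+n) * ((B*e+n^2) * (C*e+n^2)) := by
      rw [id1, id2, ← ht]; ring
    have hstep1 : (e*B)*(e*C) ≤ (B*e+n^2) * (C*e+n^2) := aux_step1 B C e n hB hC hgt
    have hstep2 : (B*C - m) * ((e*B)*(e*C)) ≤ (B*C+n) * ((B*e+n^2) * (C*e+n^2)) :=
      calc (B*C - m) * ((e*B)*(e*C))
          ≤ (B*C - m) * ((B*e+n^2) * (C*e+n^2)) :=
            mul_le_mul_of_nonneg_left hstep1 hp.le
        _ ≤ (B*C+n) * ((B*e+n^2) * (C*e+n^2)) :=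
            mul_le_mul_of_nonneg_right (by linarith) (mul_nonneg hA2.le hA3.le)
    have hYsq : (e*(B*C - m))^2 ≤ (t*((B*z - t*y)*(C*y - t*z)))^2 := by
      rw [hXsq]
      exact aux_step2 B C e (B*C - m) _ hp (by linarith) hgt hstep2
    have hXge : e*(B*C - m) ≤ t*((B*z - t*y)*(C*y - t*z)) :=
      le_of_pow_le_pow_left₀ (by norm_num) hX.le hYsq
    have hne : -m*e ≤ n*e := mul_le_mul_of_nonneg_right hmn1 he0
    have hfacpos : (0:ℤ) < 4*B*C - 3*m := by
      have := mul_pos hB hC; linarith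
    have hfac : 4*B*C - 3*m ≤ e*(4*B*C - 3*m) := le_mul_of_one_le_left hfacpos.le he1
    linarith [idI, hne, hXge, hfac]

theorem stmt_7 (n a b c d : ℤ) (hn : n ≠ 0)
    (hna : |n|^3 ≤ a) (hab : a < b) (hbc : b < c) (hcd : c < d)
    (h1 : IsSquare (a*b + n)) (h2 : IsSquare (a*c + n)) (h3 : IsSquare (a*d + n))
    (h4 : IsSquare (b*c + n)) (h5 : IsSquare (b*d + n)) (h6 : IsSquare (c*d + n)) :
    (d : ℝ) > 3.847 * (b:ℝ) * (c:ℝ) / (n:ℝ)^2 := by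
  obtain ⟨m, hmabs⟩ : ∃ m : ℤ, m = |n| := ⟨_, rfl⟩
  rw [← hmabs] at hna
  have hm1 : 1 ≤ m := by rw [hmabs]; exact Int.one_le_abs (by omega)
  have hnm : n ≤ m := by rw [hmabs]; exact le_abs_self n
  have hmn : -m ≤ n := by rw [hmabs]; exact neg_abs_le n
  have hm3 : m ≤ m^3 := le_self_pow₀ hm1 (by norm_num)
  have hm23 : m^2 ≤ m^3 := by
    have h := mul_le_mul_of_nonneg_left hm1 (sq_nonneg m)
    linarith [h]
  have ha1 : 1 ≤ a := by
    have h13 : (1:ℤ)^3 ≤ m^3 := pow_le_pow_left₀ one_pos.le hm1 3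
    norm_num at h13
    linarith
  have hb : 0 < b := by omega
  have hc : 0 < c := by omega
  have hd : 0 < d := by omega
  have hn2m : n^2 = m^2 := by rw [hmabs, sq_abs]
  -- extract nonnegative square roots
  obtain ⟨s0, hs0⟩ := h2
  obtain ⟨x0, hx0⟩ := h3
  obtain ⟨t0, ht0⟩ := h4
  obtain ⟨y0, hy0⟩ := h5
  obtain ⟨z0, hz0⟩ := h6
  have hsq_s : |s0|^2 = a*c + n := by rw [sq_abs, sq, ← hs0]
  have hsq_x : |x0|^2 = a*d + n := by rw [sq_abs, sq, ← hx0]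
  have hsq_t : |t0|^2 = b*c + n := by rw [sq_abs, sq, ← ht0]
  have hsq_y : |y0|^2 = b*d + n := by rw [sq_abs, sq, ← hy0]
  have hsq_z : |z0|^2 = c*d + n := by rw [sq_abs, sq, ← hz0]
  set s := |s0| with hsdef
  set x := |x0| with hxdef
  set t := |t0| with htdef
  set y := |y0| with hydef
  set z := |z0| with hzdef
  have hs_nn : 0 ≤ s := abs_nonneg _
  have hx_nn : 0 ≤ x := abs_nonneg _
  have ht_nn : 0 ≤ t := abs_nonneg _
  have hy_nn : 0 ≤ y := abs_nonneg _
  have hz_nn : 0 ≤ z := abs_nonneg _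
  have hma : m ≤ a := le_trans hm3 hna
  have hn2d : n^2 < d := by rw [hn2m]; linarith [hm23, hm3]
  -- hypotheses for the first application, triple (b,c,d)
  have hmbc : m < b*c := by
    have h := le_mul_of_one_le_right hb.le (by omega : (1:ℤ) ≤ c)
    linarith
  -- main inequality in ℤ
  have key : 1000 * (m^2 * d) > 3847 * (b*c) := by
    rcases triple_gap n b c d t y z m hn hmabs hb hbc hcd ht_nn hy_nn hz_nn
        hsq_t hsq_y hsq_z hmbc (by omega) (by omega) hn2d with hreg | hbig
    · -- d = b + c + 2t : derive a contradiction using a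
      exfalso
      have hmac : m < a*c := by
        have h := mul_le_mul_of_nonneg_left (by omega : (2:ℤ) ≤ c) (by omega : (0:ℤ) ≤ a)
        linarith
      rcases triple_gap n a c d s x z m hn hmabs (by omega) (by omega) hcd hs_nn hx_nn hz_nn
          hsq_s hsq_x hsq_z hmac (by omega) (by omega) hn2d with hreg2 | hbig2
      · -- d = a + c + 2s as well : impossible since s < t
        have hst2 : s^2 < t^2 := by
          rw [hsq_s, hsq_t]
          have h := mul_lt_mul_of_pos_right hab hc
          linarith
        have hst : s < t := sqrt_lt_sqrt_int ht_nn hst2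
        omega
      · -- n²d ≥ n²(a+c) + 4ac - 3m, but d = b+c+2t is small
        rw [hn2m, hreg] at hbig2
        have htc2 : t^2 < c^2 := by
          rw [hsq_t]
          have h := mul_le_mul_of_nonneg_right (by omega : b ≤ c - 1) hc.le
          have hc2 : (c-1)*c + (c-1) ≤ c^2 - 1 := by ring_nf; linarith
          linarith [h, hma, hnm]
        have htc : t < c := sqrt_lt_sqrt_int hc.le htc2
        have hlin : b - a + 2*t ≤ 3*c - 4 := by omega
        have hq1 : m^2*(b - a + 2*t) ≤ m^2*(3*c-4) :=
          mul_le_mul_of_nonneg_left hlin (sq_nonneg m)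
        have hq2 : m^3*c ≤ a*c := mul_le_mul_of_nonneg_right hna hc.le
        have hfac : (0:ℤ) < (4*m-3)*(m^2*c+m) := by
          apply mul_pos (by omega)
          have hm2_1 : (1:ℤ) ≤ m^2 := by
            have h := mul_le_mul_of_nonneg_left hm1 (by linarith : (0:ℤ) ≤ m)
            linarith [h]
          have h := mul_le_mul_of_nonneg_right hm2_1 hc.le
          linarith
        linarith [hbig2, hq1, hq2, hfac]
    · -- n²d ≥ n²(b+c) + 4bc - 3m
      rw [hn2m] at hbig
      have hq1 : m^2*5 ≤ m^2*(b+c) :=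
        mul_le_mul_of_nonneg_left (by omega : (5:ℤ) ≤ b + c) (sq_nonneg m)
      have hq2 : m ≤ m^2 := by
        have h := mul_le_mul_of_nonneg_left hm1 (by linarith : (0:ℤ) ≤ m)
        linarith [h]
      linarith [hbig, hq1, hq2, mul_pos hb hc]
  -- convert to ℝ
  have hn2R : (0:ℝ) < (n:ℝ)^2 := by positivity
  rw [gt_iff_lt, div_lt_iff₀ hn2R]
  have key2 : 1000 * (n^2 * d) > 3847 * (b*c) := by rw [hn2m]; exact key
  have hcast : (3847:ℝ)*((b:ℝ)*(c:ℝ)) < 1000*((n:ℝ)^2*(d:ℝ)) := by exact_mod_cast key2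
  have h847 : (3.847:ℝ) = 3847/1000 := by norm_num
  rw [h847]
  linarith
end

section
/- Let n be an integer with |n| ≥ 2 and suppose {a,b,c,d} is a set of positive integers with the property D(n) such that n^2 ≤ a < b < c < d. Then c > 3.88·a and d > 4.89·c. -/
/-- Core polynomial inequality for part 1. -/
lemma ineq_I1 (a b c : ℤ) (ha : 4 ≤ a) (hab : a < b) (hbc : b < c)
    (hc : 100*c ≤ 388*a) :
    (2*(b+c-a)+1)^4 < 128*b*(2*b-1)*(2*c-1)^2 := by
  have hb5 : 5 ≤ b := by linarith
  have j1 : (2*(b+c-a)+1)^2 ≤ 15*(b*(2*c-1)) := by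
    nlinarith [mul_nonneg (by linarith : (0:ℤ) ≤ b - a - 1) (by linarith : (0:ℤ) ≤ c - b - 1),
      mul_nonneg (by linarith : (0:ℤ) ≤ b - a - 1) (by linarith : (0:ℤ) ≤ 388*a - 100*c),
      mul_nonneg (by linarith : (0:ℤ) ≤ c - b - 1) (by linarith : (0:ℤ) ≤ 388*a - 100*c),
      mul_nonneg (by linarith : (0:ℤ) ≤ a - 4) (by linarith : (0:ℤ) ≤ c - b - 1),
      mul_nonneg (by linarith : (0:ℤ) ≤ a - 4) (by linarith : (0:ℤ) ≤ b - a - 1),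
      sq_nonneg (b - a), sq_nonneg (c - b), sq_nonneg (b + c - a)]
  have hq : (0:ℤ) ≤ (2*(b+c-a)+1)^2 := sq_nonneg _
  have hsq : ((2*(b+c-a)+1)^2)^2 ≤ (15*(b*(2*c-1)))^2 :=
    pow_le_pow_left₀ hq j1 2
  have hlast : (15*(b*(2*c-1)))^2 < 128*b*(2*b-1)*(2*c-1)^2 := by
    nlinarith [sq_nonneg (2*c-1), mul_pos (by linarith : (0:ℤ) < b) (by linarith : (0:ℤ) < 2*c-1),
      mul_pos (mul_pos (by linarith : (0:ℤ) < b) (by linarith : (0:ℤ) < 2*c-1)) (by linarith : (0:ℤ) < 2*c-1)]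
  calc (2*(b+c-a)+1)^4 = ((2*(b+c-a)+1)^2)^2 := by ring
    _ ≤ (15*(b*(2*c-1)))^2 := hsq
    _ < 128*b*(2*b-1)*(2*c-1)^2 := hlast

/-- Core polynomial inequality for part 2. -/
lemma ineq_I2 (c d : ℤ) (hc : 16 ≤ c) (hcd : c < d) (hd : 100*d ≤ 489*c) :
    (2*(c+d)-7)^4 < 128*c*(2*c-1)*(2*d-1)^2 := by
  have j2 : (2*(c+d)-7)^2 < 8*((2*c-1)*(2*d-1)) := by
    nlinarith [mul_nonneg (by linarith : (0:ℤ) ≤ d - c - 1) (by linarith : (0:ℤ) ≤ 489*c - 100*d),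
      mul_nonneg (by linarith : (0:ℤ) ≤ c - 16) (by linarith : (0:ℤ) ≤ d - c - 1),
      mul_nonneg (by linarith : (0:ℤ) ≤ c - 16) (by linarith : (0:ℤ) ≤ 489*c - 100*d)]
  have hq0 : (0:ℤ) ≤ (2*(c+d)-7)^2 := sq_nonneg _
  have hsq : ((2*(c+d)-7)^2)^2 < (8*((2*c-1)*(2*d-1)))^2 := by
    apply pow_lt_pow_left₀ j2 hq0
    norm_num
  have hlast : (8*((2*c-1)*(2*d-1)))^2 ≤ 128*c*(2*c-1)*(2*d-1)^2 := by
    nlinarith [mul_pos (by linarith : (0:ℤ) < 2*c-1)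
      (mul_pos (by linarith : (0:ℤ) < 2*d-1) (by linarith : (0:ℤ) < 2*d-1))]
  calc (2*(c+d)-7)^4 = ((2*(c+d)-7)^2)^2 := by ring
    _ < (8*((2*c-1)*(2*d-1)))^2 := hsq
    _ ≤ 128*c*(2*c-1)*(2*d-1)^2 := hlast

/-- Bridge: the quartic hypothesis of the key lemma follows from the core
inequality. -/
lemma bridge (n e f g : ℤ) (hn : 2 ≤ |n|) (hne : n^2 ≤ e) (hef : e < f) (hfg : f < g)
    (hcore : (2*(f+g-e)+1)^4 < 128*f*(2*f-1)*(2*g-1)^2) :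
    (e*(f+g-e)+n)^4 < 64*e^2*(e*f+n)*(e*g+n)*(f*g+n) := by
  have habs : 2*|n| ≤ n^2 := by nlinarith [sq_abs n, abs_nonneg n]
  have he4 : 4 ≤ e := by nlinarith [sq_abs n]
  have hnl : -e ≤ 2*n := by nlinarith [neg_abs_le n]
  have hnr : 2*n ≤ e := by nlinarith [le_abs_self n]
  have hf : e + 1 ≤ f := hef
  have hg : f + 1 ≤ g := hfg
  have A1 : e*(2*f-1) ≤ 2*(e*f+n) := by nlinarith
  have A2 : e*(2*g-1) ≤ 2*(e*g+n) := by nlinarith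
  have A3 : f*(2*g-1) ≤ 2*(f*g+n) := by nlinarith
  have pos1 : (0:ℤ) < e*(2*f-1) := mul_pos (by linarith) (by linarith)
  have pos2 : (0:ℤ) < e*(2*g-1) := mul_pos (by linarith) (by linarith)
  have pos3 : (0:ℤ) < f*(2*g-1) := mul_pos (by linarith) (by linarith)
  have P12 : (e*(2*f-1)) * (e*(2*g-1)) ≤ (2*(e*f+n)) * (2*(e*g+n)) :=
    mul_le_mul A1 A2 (le_of_lt pos2) (by linarith)
  have P123 : ((e*(2*f-1)) * (e*(2*g-1))) * (f*(2*g-1))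
      ≤ ((2*(e*f+n)) * (2*(e*g+n))) * (2*(f*g+n)) :=
    mul_le_mul P12 A3 (le_of_lt pos3)
      (mul_nonneg (by linarith) (by linarith))
  have hD : 0 < 2*(e*(f+g-e)+n) := by nlinarith
  have hDle : 2*(e*(f+g-e)+n) ≤ e*(2*(f+g-e)+1) := by nlinarith
  have step1 : (2*(e*(f+g-e)+n))^4 ≤ (e*(2*(f+g-e)+1))^4 :=
    pow_le_pow_left₀ (le_of_lt hD) hDle 4
  have step3 : e^4 * (2*(f+g-e)+1)^4 < e^4 * (128*f*(2*f-1)*(2*g-1)^2) := by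
    apply mul_lt_mul_of_pos_left hcore
    positivity
  have step4 : 128*e^2 * (((e*(2*f-1)) * (e*(2*g-1))) * (f*(2*g-1)))
      ≤ 128*e^2 * (((2*(e*f+n)) * (2*(e*g+n))) * (2*(f*g+n))) := by
    apply mul_le_mul_of_nonneg_left P123
    positivity
  have key : 16*(e*(f+g-e)+n)^4 < 16*(64*e^2*(e*f+n)*(e*g+n)*(f*g+n)) := by
    calc 16*(e*(f+g-e)+n)^4 = (2*(e*(f+g-e)+n))^4 := by ring
      _ ≤ (e*(2*(f+g-e)+1))^4 := step1
      _ = e^4 * (2*(f+g-e)+1)^4 := by ring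
      _ < e^4 * (128*f*(2*f-1)*(2*g-1)^2) := step3
      _ = 128*e^2 * (((e*(2*f-1)) * (e*(2*g-1))) * (f*(2*g-1))) := by ring
      _ ≤ 128*e^2 * (((2*(e*f+n)) * (2*(e*g+n))) * (2*(f*g+n))) := step4
      _ = 16*(64*e^2*(e*f+n)*(e*g+n)*(f*g+n)) := by ring
  linarith

lemma sqrt_gap (a r : ℤ) (ha : 4 ≤ a) (hr0 : 0 ≤ r) (h2 : 2*a^2 + a ≤ 2*r^2) :
    188*a - 100 < 200*r := by
  by_contra h
  push_neg at h
  nlinarith [mul_nonneg (by linarith : (0:ℤ) ≤ 188*a - 100 - 200*r)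
      (by linarith : (0:ℤ) ≤ 188*a - 100 + 200*r),
    mul_nonneg (by linarith : (0:ℤ) ≤ a - 4) (by linarith : (0:ℤ) ≤ a)]


lemma amgm_aux (u v : ℤ) : 4*(u*v) ≤ (u+v)^2 := by nlinarith [sq_nonneg (u-v)]

lemma basics_aux (n e f g : ℤ) (hn : 2 ≤ |n|) (hne : n^2 ≤ e) (hef : e < f) (hfg : f < g) :
    4 ≤ e ∧ -e ≤ 2*n ∧ 2*n ≤ e ∧ 0 < e*f+n ∧ 0 < e*g+n ∧ 0 < f*g+n ∧ 0 < e*(f+g-e)+n := by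
  have habs : 2*|n| ≤ n^2 := by nlinarith [sq_abs n, abs_nonneg n]
  have he4 : 4 ≤ e := by nlinarith [sq_abs n]
  have hnl : -e ≤ 2*n := by nlinarith [neg_abs_le n]
  have hnr : 2*n ≤ e := by nlinarith [le_abs_self n]
  refine ⟨he4, hnl, hnr, by nlinarith, by nlinarith, by nlinarith, by nlinarith⟩

/-- Key lemma: under the quartic hypothesis, a D(n) triple with smallest element
at least n² is regular. -/
lemma keyA (n e f g R S T : ℤ) (hn : 2 ≤ |n|) (hne : n^2 ≤ e)
    (hef : e < f) (hfg : f < g)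
    (hR : R^2 = e*f + n) (hS : S^2 = e*g + n) (hT : T^2 = f*g + n)
    (hR0 : 0 ≤ R) (hS0 : 0 ≤ S) (hT0 : 0 ≤ T)
    (hH : (e*(f+g-e)+n)^4 < 64*e^2*(e*f+n)*(e*g+n)*(f*g+n)) :
    g = e + f + 2*R ∧ T = f + R := by
  obtain ⟨he4, hnl, hnr, hefn, hegn, hfgn, hD⟩ := basics_aux n e f g hn hne hef hfg
  have hn0 : n ≠ 0 := by
    intro h
    rw [h] at hn
    norm_num at hn
  have hR1 : 1 ≤ R := by
    rcases eq_or_lt_of_le hR0 with h | h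
    · exfalso; rw [← h] at hR; simp at hR; linarith
    · linarith
  have hS1 : 1 ≤ S := by
    rcases eq_or_lt_of_le hS0 with h | h
    · exfalso; rw [← h] at hS; simp at hS; linarith
    · linarith
  have hT1 : 1 ≤ T := by
    rcases eq_or_lt_of_le hT0 with h | h
    · exfalso; rw [← h] at hT; simp at hT; linarith
    · linarith
  have heT : 0 < e*T := mul_pos (by linarith) (by linarith)
  have hRS0 : 0 < R*S := mul_pos (by linarith) (by linarith)
  have hX : 0 < e*T + R*S := by linarith
  have key : (e*T - R*S) * (e*T + R*S) = -n * (e*(f+g-e)+n) := by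
    linear_combination e^2*hT - R^2*hS - (e*g+n)*hR
  have hα0 : e*T - R*S ≠ 0 := by
    intro h
    rw [h, zero_mul] at key
    have h2 : n * (e*(f+g-e)+n) = 0 := by linarith
    rcases mul_eq_zero.mp h2 with h3 | h3
    · exact hn0 h3
    · linarith
  have hα1 : 1 ≤ (e*T - R*S)^2 := by
    have h1 : 1 ≤ |e*T - R*S| := Int.one_le_abs hα0
    have h2 : 1*1 ≤ |e*T - R*S| * |e*T - R*S| :=
      mul_le_mul h1 h1 one_pos.le (abs_nonneg _)
    have h3 : |e*T - R*S| * |e*T - R*S| = (e*T - R*S)^2 := by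
      rw [abs_mul_abs_self]; ring
    linarith
  have ksq : (e*T - R*S)^2 * (e*T + R*S)^2 = n^2 * (e*(f+g-e)+n)^2 := by
    linear_combination ((e*T - R*S)*(e*T + R*S) - n*(e*(f+g-e)+n)) * key
  have c0 : (0:ℤ) ≤ (e*T)*(R*S) := le_of_lt (mul_pos heT hRS0)
  have c1 : 4*((e*T)*(R*S)) ≤ (e*T+R*S)^2 := amgm_aux (e*T) (R*S)
  have c2 : (4*((e*T)*(R*S)))^2 ≤ ((e*T+R*S)^2)^2 :=
    pow_le_pow_left₀ (by linarith) c1 2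
  have c3 : (4*((e*T)*(R*S)))^2 = 16*(e^2*((e*f+n)*((e*g+n)*(f*g+n)))) := by
    have h : (4*((e*T)*(R*S)))^2 = 16*(e^2*(T^2*(R^2*S^2))) := by ring
    rw [h, hR, hS, hT]; ring
  have h4P : 16*(e^2*((e*f+n)*((e*g+n)*(f*g+n)))) ≤ ((e*T+R*S)^2)^2 := by
    rw [← c3]; exact c2
  have hstep : n^2*(e*(f+g-e)+n)^2 < (n^2+e)*(e*T+R*S)^2 := by
    by_contra hcon
    push_neg at hcon
    have hc2 : ((n^2+e)*(e*T+R*S)^2)^2 ≤ (n^2*(e*(f+g-e)+n)^2)^2 :=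
      pow_le_pow_left₀ (by positivity) hcon 2
    have e1 : (2*n^2)^2 * ((e*T+R*S)^2)^2 ≤ ((n^2+e)*(e*T+R*S)^2)^2 := by
      calc (2*n^2)^2 * ((e*T+R*S)^2)^2 ≤ (n^2+e)^2 * ((e*T+R*S)^2)^2 := by
            apply mul_le_mul_of_nonneg_right _ (by positivity)
            apply pow_le_pow_left₀ (by positivity) (by linarith) 2
        _ = ((n^2+e)*(e*T+R*S)^2)^2 := by ring
    have e2 : (2*n^2)^2 * (16*(e^2*((e*f+n)*((e*g+n)*(f*g+n)))))
        ≤ (2*n^2)^2 * ((e*T+R*S)^2)^2 :=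
      mul_le_mul_of_nonneg_left h4P (by positivity)
    have e4 : (2*n^2)^2*(16*(e^2*((e*f+n)*((e*g+n)*(f*g+n)))))
        = n^4 * (64*e^2*(e*f+n)*(e*g+n)*(f*g+n)) := by ring
    have e3 : (n^2*(e*(f+g-e)+n)^2)^2 = n^4 * (e*(f+g-e)+n)^4 := by ring
    have hn4 : (0:ℤ) < n^4 := by positivity
    have final : n^4 * (64*e^2*(e*f+n)*(e*g+n)*(f*g+n)) ≤ n^4 * (e*(f+g-e)+n)^4 := by
      calc n^4 * (64*e^2*(e*f+n)*(e*g+n)*(f*g+n))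
          = (2*n^2)^2*(16*(e^2*((e*f+n)*((e*g+n)*(f*g+n))))) := by rw [e4]
        _ ≤ (2*n^2)^2 * ((e*T+R*S)^2)^2 := e2
        _ ≤ ((n^2+e)*(e*T+R*S)^2)^2 := e1
        _ ≤ (n^2*(e*(f+g-e)+n)^2)^2 := hc2
        _ = n^4 * (e*(f+g-e)+n)^4 := e3
    have := le_of_mul_le_mul_left final hn4
    linarith
  have hα2 : (e*T - R*S)^2 < n^2 + e := by
    by_contra hcon
    push_neg at hcon
    have h1 : (n^2+e) * (e*T+R*S)^2 ≤ (e*T-R*S)^2 * (e*T+R*S)^2 :=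
      mul_le_mul_of_nonneg_right hcon (sq_nonneg _)
    rw [ksq] at h1
    linarith
  have hW : (e*T - R*S)^2 - n^2 = e * (e*T^2 - 2*T*(R*S) + e*(f*g) + f*n + g*n) := by
    linear_combination S^2*hR + (e*f+n)*hS
  have hW0 : e*T^2 - 2*T*(R*S) + e*(f*g) + f*n + g*n = 0 := by
    have l1 : e * (e*T^2 - 2*T*(R*S) + e*(f*g) + f*n + g*n) < e*1 := by
      rw [← hW]; linarith
    have hne' : e*(-1) = -e := by ring
    have l2 : e*(-1) < e * (e*T^2 - 2*T*(R*S) + e*(f*g) + f*n + g*n) := by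
      rw [← hW, hne']; linarith
    have l1' : e*T^2 - 2*T*(R*S) + e*(f*g) + f*n + g*n < 1 :=
      lt_of_mul_lt_mul_left l1 (by linarith)
    have l2' : (-1:ℤ) < e*T^2 - 2*T*(R*S) + e*(f*g) + f*n + g*n :=
      lt_of_mul_lt_mul_left l2 (by linarith)
    linarith
  have hαn2 : (e*T - R*S)^2 = n^2 := by
    have h := hW
    rw [hW0, mul_zero] at h
    linarith
  have hfact : (e*T - R*S - n)*(e*T - R*S + n) = 0 := by linear_combination hαn2
  have hXD : e*T + R*S = e*(f+g-e)+n := by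
    rcases mul_eq_zero.mp hfact with h | h
    · exfalso
      have hα : e*T - R*S = n := by linarith
      rw [hα] at key
      have h2 : n * ((e*T + R*S) + (e*(f+g-e)+n)) = 0 := by linear_combination key
      rcases mul_eq_zero.mp h2 with h3 | h3
      · exact hn0 h3
      · linarith
    · have hα : e*T - R*S = -n := by linarith
      rw [hα] at key
      have h2 : n * ((e*T + R*S) - (e*(f+g-e)+n)) = 0 := by linear_combination -key
      rcases mul_eq_zero.mp h2 with h3 | h3
      · exact absurd h3 hn0
      · linarith
  have hRS : (e*(f+g-e)+n) - e*T = R*S := by linarith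
  have hRS2 : ((e*(f+g-e)+n) - e*T)^2 = (e*f+n)*(e*g+n) := by
    rw [hRS, mul_pow, hR, hS]
  have hlin : (e*(e*(f+g-e)+n)) * (2*T - (f+g-e)) = 0 := by
    linear_combination e^2*hT - hRS2
  have h2T : 2*T = f+g-e := by
    rcases mul_eq_zero.mp hlin with h | h
    · exfalso
      rcases mul_eq_zero.mp h with h' | h' <;> linarith
    · linarith
  have hgef : (g-e-f-2*R)*(g-e-f+2*R) = 0 := by
    linear_combination (-(2*T + (f+g-e)))*h2T + 4*hT - 4*hR
  have hRbig : e < 2*R := by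
    by_contra hcon
    push_neg at hcon
    have hsq : (2*R)^2 ≤ e^2 := pow_le_pow_left₀ (by linarith) hcon 2
    have hexp : (2*R)^2 = 4*R^2 := by ring
    have hef2 : e*(e+1) ≤ e*f := mul_le_mul_of_nonneg_left (by linarith) (by linarith)
    linarith [hR, sq_nonneg e]
  have hge : g - e - f = 2*R := by
    rcases mul_eq_zero.mp hgef with h | h
    · linarith
    · exfalso
      have hgl : g = e + f - 2*R := by linarith
      linarith
  exact ⟨by linarith, by linarith⟩


theorem stmt_8 (n a b c d : ℤ) (hn : 2 ≤ |n|)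
    (hna : n^2 ≤ a) (hab : a < b) (hbc : b < c) (hcd : c < d)
    (h1 : IsSquare (a*b + n)) (h2 : IsSquare (a*c + n)) (h3 : IsSquare (a*d + n))
    (h4 : IsSquare (b*c + n)) (h5 : IsSquare (b*d + n)) (h6 : IsSquare (c*d + n)) :
    (c : ℝ) > 3.88 * (a:ℝ) ∧ (d : ℝ) > 4.89 * (c:ℝ) := by
  have ha4 : 4 ≤ a := by nlinarith [sq_abs n, abs_nonneg n]
  have hnl : -a ≤ 2*n := by nlinarith [neg_abs_le n, sq_abs n, abs_nonneg n]
  obtain ⟨r0, hr0⟩ := h1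
  obtain ⟨s0, hs0⟩ := h2
  obtain ⟨x0, hx0⟩ := h3
  obtain ⟨t0, ht0⟩ := h4
  obtain ⟨y0, hy0⟩ := h5
  obtain ⟨z0, hz0⟩ := h6
  have hr : |r0|^2 = a*b + n := by rw [sq_abs, sq]; exact hr0.symm
  have hs : |s0|^2 = a*c + n := by rw [sq_abs, sq]; exact hs0.symm
  have hx : |x0|^2 = a*d + n := by rw [sq_abs, sq]; exact hx0.symm
  have ht : |t0|^2 = b*c + n := by rw [sq_abs, sq]; exact ht0.symm
  have hy : |y0|^2 = b*d + n := by rw [sq_abs, sq]; exact hy0.symm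
  have hz : |z0|^2 = c*d + n := by rw [sq_abs, sq]; exact hz0.symm
  have hgap1 : 388*a < 100*c := by
    by_contra hcon
    push_neg at hcon
    obtain ⟨hceq, -⟩ := keyA n a b c |r0| |s0| |t0| hn hna hab hbc hr hs ht
      (abs_nonneg _) (abs_nonneg _) (abs_nonneg _)
      (bridge n a b c hn hna hab hbc (ineq_I1 a b c ha4 hab hbc hcon))
    have hba : a*(a+1) ≤ a*b := mul_le_mul_of_nonneg_left (by linarith) (by linarith)
    have hr2 : 2*a^2 + a ≤ 2*|r0|^2 := by
      rw [hr]; nlinarith [hba, hnl]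
    have h20 := sqrt_gap a |r0| ha4 (abs_nonneg r0) hr2
    linarith [hceq]
  have goal1 : (c : ℝ) > 3.88 * (a:ℝ) := by
    have h : (388:ℝ)*(a:ℝ) < 100*(c:ℝ) := by exact_mod_cast hgap1
    linarith
  refine ⟨goal1, ?_⟩
  have h1552 : 1552 < 100*c := by linarith
  have hc16 : 16 ≤ c := by omega
  by_contra hcon
  push_neg at hcon
  have h489 : 100*d ≤ 489*c := by
    have h : (100:ℝ)*(d:ℝ) ≤ 489*(c:ℝ) := by linarith
    exact_mod_cast h
  have hnb : n^2 ≤ b := by linarith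
  have core2 := ineq_I2 c d hc16 hcd h489
  have core_bcd : (2*(c+d-b)+1)^4 < 128*c*(2*c-1)*(2*d-1)^2 := by
    have hmono : (2*(c+d-b)+1)^4 ≤ (2*(c+d)-7)^4 :=
      pow_le_pow_left₀ (by linarith) (by linarith) 4
    linarith
  have core_acd : (2*(c+d-a)+1)^4 < 128*c*(2*c-1)*(2*d-1)^2 := by
    have hmono : (2*(c+d-a)+1)^4 ≤ (2*(c+d)-7)^4 :=
      pow_le_pow_left₀ (by linarith) (by linarith) 4
    linarith
  obtain ⟨-, hz1⟩ := keyA n b c d |t0| |y0| |z0| hn hnb hbc hcd ht hy hz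
    (abs_nonneg _) (abs_nonneg _) (abs_nonneg _)
    (bridge n b c d hn hnb hbc hcd core_bcd)
  obtain ⟨-, hz2⟩ := keyA n a c d |s0| |x0| |z0| hn hna (by linarith) hcd hs hx hz
    (abs_nonneg _) (abs_nonneg _) (abs_nonneg _)
    (bridge n a c d hn hna (by linarith) hcd core_acd)
  have hst : |s0| = |t0| := by linarith
  have heq : a*c + n = b*c + n := by
    rw [← hs, ← ht, hst]
  have hac : a*c < b*c := mul_lt_mul_of_pos_right hab (by linarith)
  linarith
end

section
/- Let n be an integer with |n| ≥ 2, and let a_1 < a_2 < ... < a_m be positive integers with n^2 < a_1 and a_m < |n|^3, such that a_i·a_j + n is a perfect square for all i ≠ j. Then m < 0.65·log|n| + 2.24. -/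
/-
Let `x < y < z` with `n² < x` and `x y + n = r²`, `x z + n = s²`, `y z + n = t²` (`r, s, t ≥ 0`),
and put `e = n (x + y + z) + 2 x y z - 2 r s t`, `E = z² - (x + y) z - n`. Then
`(z r - s t)² = z e + n²` and `(z r - s t) (z r + s t) = n E`, so `e ≥ 0` as `z > n²`.
If `e = 0` then `z r - s t = n` (the sign `-n` is impossible), which is the regular extension
`z = x + y + 2 r`. If `e ≥ 1` then `n² E² ≥ z (z r + s t)² ≥ (7/2) x y z³`, and since `n² < x`
and `0 < E < z (z - y)` this forces `z > 5.3 y`.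
Hence in a D(n)-set `a₁ < ⋯ < a_m` above `n²` we have `a₃ > 3.5 a₁`, and `a_{i+1} > 4.8 a_i` for
`i ≥ 3`, because `a_{i+1}` cannot be the regular extension of both `{a₁, a_i}` and `{a₂, a_i}`.
So `3.5 · 4.8^(m-3) n² < a_m < |n|³`, and taking logarithms gives the bound.
-/

lemma exists_nonneg_sq_eq_of_isSquare {k : ℤ} (h : IsSquare k) : ∃ r, 0 ≤ r ∧ r ^ 2 = k := by
  obtain ⟨r, rfl⟩ := h
  exact ⟨|r|, abs_nonneg r, by rw [sq_abs, sq]⟩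

lemma twentyFour_mul_lt_five_mul_of_seven_mul_lt {y z : ℤ} (hy : 0 < y) (hyz : y < z)
    (h : 7 * y * z < 2 * (z - y) ^ 2) : 24 * y < 5 * z := by
  by_contra! hzy
  nlinarith [mul_nonneg (sub_nonneg.2 hyz.le) (sub_nonneg.2 hzy), mul_pos hy (hy.trans hyz)]

section Triple

variable {n x y z r s t : ℤ}

lemma abs_lt_of_sq_lt (hx : n ^ 2 < x) : |n| < x :=
  (Int.le_self_sq |n|).trans_lt (by rwa [sq_abs])

lemma lt_of_sq_eq_mul_add (hnx : |n| < x) (hxy : x < y) (hr : 0 ≤ r)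
    (hr2 : r ^ 2 = x * y + n) : x < r := by
  have hx0 : 0 ≤ x := (abs_nonneg n).trans hnx.le
  have : x ^ 2 < r ^ 2 := by nlinarith [neg_abs_le n, mul_le_mul_of_nonneg_left hxy hx0]
  exact lt_of_pow_lt_pow_left₀ 2 hr this

lemma seven_mul_le_eight_mul_of_sq_eq (hn : 2 ≤ |n|) (hx : n ^ 2 < x) (hxy : x < y) (hyz : y < z)
    (hr : 0 ≤ r) (hs : 0 ≤ s) (ht : 0 ≤ t)
    (hr2 : r ^ 2 = x * y + n) (hs2 : s ^ 2 = x * z + n) (ht2 : t ^ 2 = y * z + n) :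
    7 * (x * y * z) ≤ 8 * (r * s * t) := by
  have hx0 : 0 < x := (abs_nonneg n).trans_lt (abs_lt_of_sq_lt hx)
  have hx2 : 2 * |n| + 1 ≤ x := by nlinarith [sq_abs n]
  have h12 : 12 * |n| ≤ x * y := by
    nlinarith [mul_le_mul hx2 hx2 (by positivity) hx0.le, mul_le_mul_of_nonneg_left hxy.le hx0.le]
  have hxz : x * y ≤ x * z := mul_le_mul_of_nonneg_left hyz.le hx0.le
  have hyz' : x * y ≤ y * z := by nlinarith
  have hxyz : 0 < x * y * z := by nlinarith
  have hr' : 11 * (x * y) ≤ 12 * r ^ 2 := by linarith [neg_abs_le n]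
  have hs' : 11 * (x * z) ≤ 12 * s ^ 2 := by linarith [neg_abs_le n]
  have ht' : 11 * (y * z) ≤ 12 * t ^ 2 := by linarith [neg_abs_le n]
  -- `(11/12)³ > (7/8)²`
  have hprod : 11 ^ 3 * (x * y * z) ^ 2 ≤ 12 ^ 3 * (r * s * t) ^ 2 := by
    calc 11 ^ 3 * (x * y * z) ^ 2 = 11 * (x * y) * (11 * (x * z)) * (11 * (y * z)) := by ring
      _ ≤ 12 * r ^ 2 * (12 * s ^ 2) * (12 * t ^ 2) :=
        mul_le_mul (mul_le_mul hr' hs' (by nlinarith) (by positivity)) ht' (by nlinarith)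
          (by positivity)
      _ = 12 ^ 3 * (r * s * t) ^ 2 := by ring
  have hsq : (7 * (x * y * z)) ^ 2 ≤ (8 * (r * s * t)) ^ 2 := by nlinarith
  exact (pow_le_pow_iff_left₀ (by linarith) (by positivity) two_ne_zero).1 hsq

lemma seven_mul_le_two_mul_sq_add (hn : 2 ≤ |n|) (hx : n ^ 2 < x) (hxy : x < y) (hyz : y < z)
    (hr : 0 ≤ r) (hs : 0 ≤ s) (ht : 0 ≤ t)
    (hr2 : r ^ 2 = x * y + n) (hs2 : s ^ 2 = x * z + n) (ht2 : t ^ 2 = y * z + n) :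
    7 * (x * y * z ^ 2) ≤ 2 * (z * r + s * t) ^ 2 := by
  have h := seven_mul_le_eight_mul_of_sq_eq hn hx hxy hyz hr hs ht hr2 hs2 ht2
  have hz : 0 ≤ z := by nlinarith [sq_nonneg n]
  nlinarith [sq_nonneg (z * r - s * t), mul_le_mul_of_nonneg_left h hz]

lemma seven_mul_lt_two_mul_sub_sq (hnx : |n| < x) (hxy : x < y) (hyz : y < z)
    (h : 7 * y * z ^ 3 ≤ 2 * (z ^ 2 - (x + y) * z - n) ^ 2) : 7 * y * z < 2 * (z - y) ^ 2 := by
  set E := z ^ 2 - (x + y) * z - n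
  have hx0 : 0 < x := (abs_nonneg n).trans_lt hnx
  have hz0 : 0 < z := by linarith
  have hzx : |n| < z * x := by nlinarith
  have hE_lt : E < z * (z - y) := by nlinarith [neg_abs_le n]
  have hE_gt : -(z * x) < E := by nlinarith [le_abs_self n]
  have hE_pos : 0 < E := by
    by_contra! hE0
    have : E ^ 2 < (z * x) ^ 2 := by nlinarith
    have hxx : x * x < y * z := mul_lt_mul'' hxy (hxy.trans hyz) hx0.le hx0.le
    nlinarith [mul_lt_mul_of_pos_left hxx (pow_pos hz0 2)]
  have : E ^ 2 < (z * (z - y)) ^ 2 := pow_lt_pow_left₀ hE_lt hE_pos.le two_ne_zero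
  have : z ^ 2 * (7 * y * z) < z ^ 2 * (2 * (z - y) ^ 2) := by nlinarith
  exact lt_of_mul_lt_mul_left this (sq_nonneg z)

lemma eq_add_add_two_mul_or_seven_mul_lt (hn : 2 ≤ |n|) (hx : n ^ 2 < x) (hxy : x < y)
    (hyz : y < z) (hr : 0 ≤ r) (hs : 0 ≤ s) (ht : 0 ≤ t)
    (hr2 : r ^ 2 = x * y + n) (hs2 : s ^ 2 = x * z + n) (ht2 : t ^ 2 = y * z + n) :
    z = x + y + 2 * r ∨ 7 * y * z < 2 * (z - y) ^ 2 := by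
  have hnx := abs_lt_of_sq_lt hx
  have hn0 : n ≠ 0 := by rintro rfl; simp at hn
  have hx0 : 0 < x := (abs_nonneg n).trans_lt hnx
  have hz0 : 0 < z := by linarith
  have hrx := lt_of_sq_eq_mul_add hnx hxy hr hr2
  set E := z ^ 2 - (x + y) * z - n
  set e := n * (x + y + z) + 2 * (x * y * z) - 2 * (r * s * t)
  have hdiff : (z * r - s * t) ^ 2 = z * e + n ^ 2 := by
    linear_combination z ^ 2 * hr2 + s ^ 2 * ht2 + (y * z + n) * hs2
  have hprod : (z * r - s * t) * (z * r + s * t) = n * E := by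
    linear_combination z ^ 2 * hr2 - s ^ 2 * ht2 - (y * z + n) * hs2
  have he0 : 0 ≤ e := by
    by_contra! he0
    nlinarith [sq_nonneg (z * r - s * t)]
  rcases he0.eq_or_lt with he0 | he1
  · left
    have hsq : (z * r - s * t) ^ 2 = n ^ 2 := by rw [hdiff, ← he0]; ring
    rcases sq_eq_sq_iff_eq_or_eq_neg.1 hsq with hd | hd
    · rw [hd] at hprod
      have hsum := mul_left_cancel₀ hn0 hprod
      have : z * (z - (x + y + 2 * r)) = 0 := by linear_combination -hsum - hd
      linarith [(mul_eq_zero.1 this).resolve_left hz0.ne']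
    · rw [hd] at hprod
      have hsum : -(z * r + s * t) = E :=
        mul_left_cancel₀ hn0 (by linear_combination hprod)
      have hzy : z ≤ z * (z - y) := by nlinarith
      linarith [mul_lt_mul_of_pos_left hrx hz0, mul_nonneg hs ht, le_abs_self n]
  · right
    apply seven_mul_lt_two_mul_sub_sq hnx hxy hyz
    have hbound := seven_mul_le_two_mul_sq_add hn hx hxy hyz hr hs ht hr2 hs2 ht2
    have hnE : (n * E) ^ 2 = (z * e + n ^ 2) * (z * r + s * t) ^ 2 := by
      rw [← hprod, mul_pow, hdiff]
    have h1 : z * (z * r + s * t) ^ 2 ≤ n ^ 2 * E ^ 2 := by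
      nlinarith [mul_nonneg (by nlinarith : 0 ≤ z * e - z + n ^ 2) (sq_nonneg (z * r + s * t))]
    have h2 : x * (7 * y * z ^ 3) ≤ x * (2 * E ^ 2) := by
      nlinarith [mul_le_mul_of_nonneg_left hbound hz0.le,
        mul_le_mul_of_nonneg_right hx.le (sq_nonneg E)]
    exact le_of_mul_le_mul_left h2 hx0

lemma seven_mul_lt_two_mul_of_isSquare (hn : 2 ≤ |n|) (hx : n ^ 2 < x) (hxy : x < y)
    (hyz : y < z) (hxy_sq : IsSquare (x * y + n)) (hxz_sq : IsSquare (x * z + n))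
    (hyz_sq : IsSquare (y * z + n)) : 7 * x < 2 * z := by
  obtain ⟨r, hr, hr2⟩ := exists_nonneg_sq_eq_of_isSquare hxy_sq
  obtain ⟨s, hs, hs2⟩ := exists_nonneg_sq_eq_of_isSquare hxz_sq
  obtain ⟨t, ht, ht2⟩ := exists_nonneg_sq_eq_of_isSquare hyz_sq
  have hnx := abs_lt_of_sq_lt hx
  rcases eq_add_add_two_mul_or_seven_mul_lt hn hx hxy hyz hr hs ht hr2 hs2 ht2 with hz | hz
  · linarith [lt_of_sq_eq_mul_add hnx hxy hr hr2]
  · have hy0 : 0 < y := by linarith [abs_nonneg n]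
    linarith [twentyFour_mul_lt_five_mul_of_seven_mul_lt hy0 hyz hz]

end Triple

lemma twentyFour_mul_lt_five_mul_of_isSquare {n a b c d : ℤ} (hn : 2 ≤ |n|) (ha : n ^ 2 < a)
    (hab : a < b) (hbc : b < c) (hcd : c < d) (hac_sq : IsSquare (a * c + n))
    (had_sq : IsSquare (a * d + n)) (hbc_sq : IsSquare (b * c + n))
    (hbd_sq : IsSquare (b * d + n)) (hcd_sq : IsSquare (c * d + n)) : 24 * c < 5 * d := by
  obtain ⟨r₁, hr₁, hr₁2⟩ := exists_nonneg_sq_eq_of_isSquare hac_sq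
  obtain ⟨s₁, hs₁, hs₁2⟩ := exists_nonneg_sq_eq_of_isSquare had_sq
  obtain ⟨r₂, hr₂, hr₂2⟩ := exists_nonneg_sq_eq_of_isSquare hbc_sq
  obtain ⟨s₂, hs₂, hs₂2⟩ := exists_nonneg_sq_eq_of_isSquare hbd_sq
  obtain ⟨t, ht, ht2⟩ := exists_nonneg_sq_eq_of_isSquare hcd_sq
  have hc0 : 0 < c := by nlinarith [sq_nonneg n]
  have hgap : 7 * c * d < 2 * (d - c) ^ 2 → 24 * c < 5 * d :=
    twentyFour_mul_lt_five_mul_of_seven_mul_lt hc0 hcd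
  rcases eq_add_add_two_mul_or_seven_mul_lt hn ha (hab.trans hbc) hcd hr₁ hs₁ ht hr₁2 hs₁2 ht2
    with hd₁ | hd₁
  · rcases eq_add_add_two_mul_or_seven_mul_lt hn (ha.trans hab) hbc hcd hr₂ hs₂ ht hr₂2 hs₂2 ht2
      with hd₂ | hd₂
    · have hr : r₁ < r₂ := lt_of_pow_lt_pow_left₀ 2 hr₂ (by nlinarith)
      linarith
    · exact hgap hd₂
  · exact hgap hd₁

lemma seven_mul_pow_mul_lt {n : ℤ} {k : ℕ} {a : Fin (k + 3) → ℤ} (hn : 2 ≤ |n|)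
    (hmono : StrictMono a) (hlow : ∀ i, n ^ 2 < a i)
    (hsq : ∀ i j, i ≠ j → IsSquare (a i * a j + n)) :
    7 * 24 ^ k * a 0 < 2 * 5 ^ k * a (Fin.last (k + 2)) := by
  have hlt : ∀ i j : Fin (k + 3), i.val < j.val → a i < a j := fun i j h => hmono h
  have hsq' : ∀ i j : Fin (k + 3), i.val < j.val → IsSquare (a i * a j + n) :=
    fun i j h => hsq i j (Fin.ne_of_lt h)
  have base : 7 * a ⟨0, by omega⟩ < 2 * a ⟨2, by omega⟩ :=
    seven_mul_lt_two_mul_of_isSquare (y := a ⟨1, by omega⟩) hn (hlow _) (hlt _ _ (by simp))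
      (hlt _ _ (by simp)) (hsq' _ _ (by simp)) (hsq' _ _ (by simp)) (hsq' _ _ (by simp))
  suffices h : ∀ j (hj : j ≤ k),
      7 * 24 ^ j * a ⟨0, by omega⟩ < 2 * 5 ^ j * a ⟨j + 2, by omega⟩ from h k le_rfl
  intro j hj
  induction j with
  | zero => simpa using base
  | succ j ih =>
    have hstep : 24 * a ⟨j + 2, by omega⟩ < 5 * a ⟨j + 3, by omega⟩ :=
      twentyFour_mul_lt_five_mul_of_isSquare (a := a ⟨0, by omega⟩) (b := a ⟨1, by omega⟩) hn
        (hlow _) (hlt _ _ (by simp)) (hlt _ _ (by simp)) (hlt _ _ (by simp))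
        (hsq' _ _ (by simp)) (hsq' _ _ (by simp)) (hsq' _ _ (by simp)) (hsq' _ _ (by simp))
        (hsq' _ _ (by simp))
    calc 7 * 24 ^ (j + 1) * a ⟨0, by omega⟩ = 24 * (7 * 24 ^ j * a ⟨0, by omega⟩) := by ring
      _ < 24 * (2 * 5 ^ j * a ⟨j + 2, by omega⟩) :=
        mul_lt_mul_of_pos_left (ih (by omega)) (by norm_num)
      _ = 2 * 5 ^ j * (24 * a ⟨j + 2, by omega⟩) := by ring
      _ < 2 * 5 ^ j * (5 * a ⟨j + 3, by omega⟩) := by gcongr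
      _ = 2 * 5 ^ (j + 1) * a ⟨j + 1 + 2, by omega⟩ := by ring

lemma div_le_log_of_pow_le {p q : ℕ} {x : ℝ} (hq : 0 < q) (hx : 0 < x)
    (h : (2.7182818286 : ℝ) ^ p ≤ x ^ q) : (p : ℝ) / q ≤ Real.log x := by
  rw [div_le_iff₀ (by positivity), mul_comm, ← Real.log_pow,
    Real.le_log_iff_exp_le (by positivity), ← Real.exp_one_pow]
  exact (pow_le_pow_left₀ (Real.exp_pos 1).le Real.exp_one_lt_d9.le p).trans h

lemma add_three_lt_of_mul_pow_lt {k : ℕ} {N : ℝ} (h : 7 * 24 ^ k < 2 * 5 ^ k * N) :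
    (k + 3 : ℝ) < 0.65 * Real.log N + 2.24 := by
  have hN : 7 / 2 * (24 / 5 : ℝ) ^ k < N := by
    rw [div_pow, ← sub_pos]
    have : (0 : ℝ) < 5 ^ k := by positivity
    field_simp
    linarith
  have hlog : Real.log (7 / 2) + k * Real.log (24 / 5) < Real.log N := by
    rw [← Real.log_pow, ← Real.log_mul (by norm_num) (by positivity)]
    exact Real.log_lt_log (by positivity) hN
  have h₁ : ((6 : ℕ) : ℝ) / (5 : ℕ) ≤ Real.log (7 / 2) :=
    div_le_log_of_pow_le (by norm_num) (by norm_num) (by norm_num)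
  have h₂ : ((14 : ℕ) : ℝ) / (9 : ℕ) ≤ Real.log (24 / 5) :=
    div_le_log_of_pow_le (by norm_num) (by norm_num) (by norm_num)
  norm_num at h₁ h₂
  linarith [mul_le_mul_of_nonneg_left h₂ (Nat.cast_nonneg k : (0 : ℝ) ≤ k)]

theorem stmt_9 (n : ℤ) (hn : 2 ≤ |n|) (m : ℕ) (a : Fin m → ℤ)
    (hmono : StrictMono a)
    (hlow : ∀ i, n^2 < a i) (hhigh : ∀ i, a i < |n|^3)
    (hsq : ∀ i j, i ≠ j → IsSquare (a i * a j + n)) :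
    (m : ℝ) < 0.65 * Real.log |(n:ℝ)| + 2.24 := by
  obtain hm | ⟨k, rfl⟩ : m ≤ 2 ∨ ∃ k, m = k + 3 := by
    rcases Nat.lt_or_ge m 3 with h | h
    exacts [Or.inl (by omega), Or.inr ⟨m - 3, by omega⟩]
  · have hn1 : (1 : ℝ) < |(n : ℝ)| := by exact_mod_cast (by linarith : (1 : ℤ) < |n|)
    have : (m : ℝ) ≤ 2 := by exact_mod_cast hm
    linarith [Real.log_pos hn1]
  · have hgrowth := seven_mul_pow_mul_lt hn hmono hlow hsq
    have hn2 : 0 < n ^ 2 := by nlinarith [sq_abs n]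
    have hbound : 7 * 24 ^ k * n ^ 2 < 2 * 5 ^ k * |n| * n ^ 2 :=
      calc 7 * 24 ^ k * n ^ 2 < 7 * 24 ^ k * a 0 := by gcongr; exact hlow 0
        _ < 2 * 5 ^ k * a (Fin.last _) := hgrowth
        _ < 2 * 5 ^ k * |n| ^ 3 := by gcongr; exact hhigh _
        _ = 2 * 5 ^ k * |n| * n ^ 2 := by rw [← sq_abs n]; ring
    have hint := lt_of_mul_lt_mul_right hbound hn2.le
    push_cast
    exact add_three_lt_of_mul_pow_lt (by exact_mod_cast hint)
end

section
/- Let n be a nonzero integer, and suppose {a,b,c} is a set of positive integers with the property D(n) and |n|^3 ≤ a < b < c. Write ab+n=r^2, ac+n=s^2, bc+n=t^2 with r,s,t ≥ 0, and let e = n(a+b+c)+2abc-2rst. Then e ≥ 0. -/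
theorem stmt_10 (n a b c r s t : ℤ) (hn : n ≠ 0)
    (hna : |n|^3 ≤ a) (hab : a < b) (hbc : b < c)
    (hr : 0 ≤ r) (hs : 0 ≤ s) (ht : 0 ≤ t)
    (hr2 : a*b + n = r^2) (hs2 : a*c + n = s^2) (ht2 : b*c + n = t^2) :
    0 ≤ n*(a+b+c) + 2*a*b*c - 2*r*s*t := by
  have key : (s*t - c*r)^2 = c*(n*(a+b+c) + 2*a*b*c - 2*r*s*t) + n^2 := by
    linear_combination (-(t^2))*hs2 - (a*c+n)*ht2 - c^2*hr2
  have hn1 : 1 ≤ |n| := Int.one_le_abs hn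
  have hn2 : n^2 ≤ |n|^3 := by nlinarith [sq_abs n, abs_nonneg n]
  have hc : n^2 < c := by linarith
  nlinarith [sq_nonneg (s*t - c*r), key, hc, sq_nonneg n]
end

section
/- Suppose a_1 < a_2 < ... < a_22 are positive integers, all at least |n|^3 for a nonzero integer n, such that every a_i·a_j + n (i ≠ j) is a perfect square, and assume the gap principle: for any four indices i<j<k<l, a_l > 3.847·a_j·a_k/n^2. Then a_11 > a_2^55/n^108 and a_22 > a_11^144/|n|^197. -/
theorem stmt_19 (n : ℤ) (hn : n ≠ 0) (a : Fin 22 → ℤ)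
    (hmono : StrictMono a) (hlow : ∀ i, |n|^3 ≤ a i)
    (hsq : ∀ i j, i ≠ j → IsSquare (a i * a j + n))
    (hgap : ∀ i j k l : Fin 22, i < j → j < k → k < l →
      (a l : ℝ) > 3.847 * (a j : ℝ) * (a k : ℝ) / (n:ℝ)^2) :
    ((a 10 : ℤ) : ℝ) > ((a 1 : ℤ) : ℝ)^55 / (n:ℝ)^108 ∧
    ((a 21 : ℤ) : ℝ) > ((a 10 : ℤ) : ℝ)^144 / |(n:ℝ)|^197 := by
  set A : Fin 22 → ℝ := fun i => ((a i : ℤ) : ℝ) with hA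
  set b : ℝ := |(n:ℝ)| with hbdef
  have hb1 : (1:ℝ) ≤ b := by
    have h : (1:ℤ) ≤ |n| := Int.one_le_abs hn
    rw [hbdef, ← Int.cast_abs]
    exact_mod_cast h
  have hb0 : (0:ℝ) < b := lt_of_lt_of_le one_pos hb1
  have hb0' : b ≠ 0 := ne_of_gt hb0
  have hlowR : ∀ i, b ^ 3 ≤ A i := by
    intro i
    have h : ((|n|^3 : ℤ) : ℝ) ≤ ((a i : ℤ) : ℝ) := by exact_mod_cast hlow i
    simpa [hbdef, hA, Int.cast_abs] using h
  have hApos : ∀ i, 0 < A i := fun i =>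
    lt_of_lt_of_le (by positivity) (hlowR i)
  have hn2 : ((n:ℝ))^2 = b^2 := (sq_abs _).symm
  have step : ∀ (j k l : Fin 22) (x y : ℝ), (0:Fin 22) < j → j < k → k < l →
      0 ≤ x → 0 ≤ y → x ≤ A j → y ≤ A k → x * y / b^2 < A l := by
    intro j k l x y h0j hjk hkl hx hy hxj hyk
    have hg := hgap 0 j k l h0j hjk hkl
    rw [hn2] at hg
    have h1 : x * y ≤ A j * A k := mul_le_mul hxj hyk hy (hApos j).le
    have h2 : A j * A k ≤ 3.847 * A j * A k := by
      nlinarith [mul_pos (hApos j) (hApos k)]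
    have h3 : x * y / b^2 ≤ 3.847 * A j * A k / b^2 := by
      apply div_le_div_of_nonneg_right ?_ (by positivity)
      · linarith
    exact lt_of_le_of_lt h3 hg
  -- Part 1
  have comb : ∀ (j k l : Fin 22) (p q r s : ℕ), (0:Fin 22) < j → j < k → k < l →
      A 1 ^ p / b ^ q ≤ A j → A 1 ^ r / b ^ s ≤ A k →
      A 1 ^ (p+r) / b ^ (q+s+2) < A l := by
    intro j k l p q r s h0 hjk hkl hj hk
    have hx : (0:ℝ) ≤ A 1 ^ p / b ^ q :=
      div_nonneg (pow_nonneg (hApos 1).le p) (pow_nonneg hb0.le q)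
    have hy : (0:ℝ) ≤ A 1 ^ r / b ^ s :=
      div_nonneg (pow_nonneg (hApos 1).le r) (pow_nonneg hb0.le s)
    have h := step j k l _ _ h0 hjk hkl hx hy hj hk
    have he : A 1 ^ (p+r) / b ^ (q+s+2) =
        (A 1 ^ p / b ^ q) * (A 1 ^ r / b ^ s) / b ^ 2 := by
      field_simp
      ring
    rw [he]; exact h
  have h1 : A 1 ^ 1 / b ^ 0 ≤ A 1 := by simp
  have h2 : A 1 ^ 1 / b ^ 0 ≤ A 2 := by
    have h := hmono (show (1:Fin 22) < 2 by decide)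
    simp only [hA, pow_one, pow_zero, div_one]
    exact_mod_cast h.le
  have h3 := (comb 1 2 3 1 0 1 0 (by decide) (by decide) (by decide) h1 h2).le
  have h4 := (comb 2 3 4 1 0 2 2 (by decide) (by decide) (by decide) h2 h3).le
  have h5 := (comb 3 4 5 2 2 3 4 (by decide) (by decide) (by decide) h3 h4).le
  have h6 := (comb 4 5 6 3 4 5 8 (by decide) (by decide) (by decide) h4 h5).le
  have h7 := (comb 5 6 7 5 8 8 14 (by decide) (by decide) (by decide) h5 h6).le
  have h8 := (comb 6 7 8 8 14 13 24 (by decide) (by decide) (by decide) h6 h7).le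
  have h9 := (comb 7 8 9 13 24 21 40 (by decide) (by decide) (by decide) h7 h8).le
  have h10 := comb 8 9 10 21 40 34 66 (by decide) (by decide) (by decide) h8 h9
  rw [show (21+34:ℕ) = 55 from rfl, show (40+66+2:ℕ) = 108 from rfl] at h10
  constructor
  · have hne : ((n:ℝ))^108 = b^108 := by
      rw [hbdef, ← abs_pow, abs_of_nonneg (by positivity)]
    rw [hne]
    exact h10
  -- Part 2
  have comb2 : ∀ (j k l : Fin 22) (p r : ℕ) (g h : ℤ), (0:Fin 22) < j → j < k → k < l →
      A 10 ^ p * b ^ g ≤ A j → A 10 ^ r * b ^ h ≤ A k →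
      A 10 ^ (p+r) * b ^ (g+h-2) < A l := by
    intro j k l p r g h h0 hjk hkl hj hk
    have hx : (0:ℝ) ≤ A 10 ^ p * b ^ g :=
      mul_nonneg (pow_nonneg (hApos 10).le p) (zpow_nonneg hb0.le g)
    have hy : (0:ℝ) ≤ A 10 ^ r * b ^ h :=
      mul_nonneg (pow_nonneg (hApos 10).le r) (zpow_nonneg hb0.le h)
    have hs := step j k l _ _ h0 hjk hkl hx hy hj hk
    have he : A 10 ^ (p+r) * b ^ (g+h-2) =
        (A 10 ^ p * b ^ g) * (A 10 ^ r * b ^ h) / b ^ 2 := by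
      rw [pow_add, zpow_sub₀ hb0', zpow_add₀ hb0']
      rw [show ((2:ℤ)) = ((2:ℕ) : ℤ) by norm_num, zpow_natCast]
      ring
    rw [he]; exact hs
  have g10 : A 10 ^ 1 * b ^ (0:ℤ) ≤ A 10 := by simp
  have g11 : A 10 ^ 1 * b ^ (1:ℤ) ≤ A 11 := by
    have hs := step 9 10 11 (b^3) (A 10) (by decide) (by decide) (by decide)
      (by positivity) (hApos 10).le (hlowR 9) le_rfl
    have he : A 10 ^ 1 * b ^ (1:ℤ) = b^3 * A 10 / b^2 := by
      rw [zpow_one, pow_one]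
      field_simp
    rw [he]; exact hs.le
  have g12 := (comb2 10 11 12 1 1 0 1 (by decide) (by decide) (by decide) g10 g11).le
  rw [show (0 + 1 - 2:ℤ) = -1 by norm_num, show (1 + 1:ℕ) = 2 from rfl] at g12
  have g13 := (comb2 11 12 13 1 2 1 (-1) (by decide) (by decide) (by decide) g11 g12).le
  rw [show (1 + -1 - 2:ℤ) = -2 by norm_num, show (1 + 2:ℕ) = 3 from rfl] at g13
  have g14 := (comb2 12 13 14 2 3 (-1) (-2) (by decide) (by decide) (by decide) g12 g13).le
  rw [show (-1 + -2 - 2:ℤ) = -5 by norm_num, show (2 + 3:ℕ) = 5 from rfl] at g14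
  have g15 := (comb2 13 14 15 3 5 (-2) (-5) (by decide) (by decide) (by decide) g13 g14).le
  rw [show (-2 + -5 - 2:ℤ) = -9 by norm_num, show (3 + 5:ℕ) = 8 from rfl] at g15
  have g16 := (comb2 14 15 16 5 8 (-5) (-9) (by decide) (by decide) (by decide) g14 g15).le
  rw [show (-5 + -9 - 2:ℤ) = -16 by norm_num, show (5 + 8:ℕ) = 13 from rfl] at g16
  have g17 := (comb2 15 16 17 8 13 (-9) (-16) (by decide) (by decide) (by decide) g15 g16).le
  rw [show (-9 + -16 - 2:ℤ) = -27 by norm_num, show (8 + 13:ℕ) = 21 from rfl] at g17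
  have g18 := (comb2 16 17 18 13 21 (-16) (-27) (by decide) (by decide) (by decide) g16 g17).le
  rw [show (-16 + -27 - 2:ℤ) = -45 by norm_num, show (13 + 21:ℕ) = 34 from rfl] at g18
  have g19 := (comb2 17 18 19 21 34 (-27) (-45) (by decide) (by decide) (by decide) g17 g18).le
  rw [show (-27 + -45 - 2:ℤ) = -74 by norm_num, show (21 + 34:ℕ) = 55 from rfl] at g19
  have g20 := (comb2 18 19 20 34 55 (-45) (-74) (by decide) (by decide) (by decide) g18 g19).le
  rw [show (-45 + -74 - 2:ℤ) = -121 by norm_num, show (34 + 55:ℕ) = 89 from rfl] at g20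
  have g21 := comb2 19 20 21 55 89 (-74) (-121) (by decide) (by decide) (by decide) g19 g20
  rw [show (55+89:ℕ) = 144 from rfl,
    show ((-74:ℤ) + -121 - 2) = -197 by norm_num] at g21
  have he : b ^ (-197:ℤ) = (b ^ (197:ℕ))⁻¹ := by
    rw [show ((-197:ℤ)) = -((197:ℕ):ℤ) by norm_num, zpow_neg, zpow_natCast]
  rw [he] at g21
  rw [div_eq_mul_inv]
  exact g21
end
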